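/- Let (Ω, μ) be a probability space and X a bounded random variable with |X| ≤ B. Then for all λ ≥ B, |λ log E[exp(X/λ)] − E[X]| ≤ e · B²/λ. -/

import Mathlib

/-!
Writing `t = λ⁻¹`, the quantity `λ log E[exp (X / λ)]` is `λ · cgf X t`. Jensen's inequality for
`exp` gives `t E[X] ≤ cgf X t`, and Hoeffding's lemma for `X ∈ [-B, B]` gives
`cgf X t ≤ t E[X] + B² t² / 2`. Multiplying by `λ`, the error lies in `[0, B² / (2λ)]`.
-/

open MeasureTheory Real

namespace ProbabilityTheory

variable {Ω : Type*} [MeasurableSpace Ω] {μ : Measure Ω} [IsProbabilityMeasure μ] {X : Ω → ℝ}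
  {t : ℝ}

lemma cgf_sub_const (h_int : Integrable (fun ω ↦ exp (t * X ω)) μ) (c : ℝ) :
    cgf (fun ω ↦ X ω - c) μ t = cgf X μ t - t * c := by
  simp_rw [cgf, sub_eq_add_neg, mgf_add_const, log_mul (mgf_pos h_int).ne' (exp_pos _).ne',
    log_exp, mul_neg]

lemma mul_integral_le_cgf (hX : Integrable X μ) (h_int : Integrable (fun ω ↦ exp (t * X ω)) μ) :
    t * μ[X] ≤ cgf X μ t := by
  rw [cgf, le_log_iff_exp_le (mgf_pos h_int), ← integral_const_mul]
  exact convexOn_exp.map_integral_le continuousOn_exp isClosed_univ (by simp)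
    (hX.const_mul t) h_int

lemma cgf_le_mul_integral_add_of_abs_le (hm : AEMeasurable X μ) {B : ℝ}
    (hB : ∀ᵐ ω ∂μ, |X ω| ≤ B) (t : ℝ) :
    cgf X μ t ≤ t * μ[X] + B ^ 2 * t ^ 2 / 2 := by
  have hIcc : ∀ᵐ ω ∂μ, X ω ∈ Set.Icc (-B) B := by
    filter_upwards [hB] with ω hω using abs_le.mp hω
  have hoeffding := (hasSubgaussianMGF_of_mem_Icc hm hIcc).cgf_le t
  rw [cgf_sub_const (integrable_exp_mul_of_mem_Icc hm hIcc)] at hoeffding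
  have hσ : (((‖B - -B‖₊ / 2) ^ 2 : NNReal) : ℝ) = B ^ 2 := by
    rw [NNReal.coe_pow, NNReal.coe_div, coe_nnnorm, norm_eq_abs, sub_neg_eq_add, ← two_mul,
      abs_mul, div_pow, mul_pow, sq_abs]
    norm_num
  rw [hσ] at hoeffding
  linarith

lemma abs_mul_cgf_inv_sub_integral_le (hm : AEMeasurable X μ) {B : ℝ}
    (hB : ∀ᵐ ω ∂μ, |X ω| ≤ B) {l : ℝ} (hl : 0 < l) :
    |l * cgf X μ l⁻¹ - μ[X]| ≤ B ^ 2 / (2 * l) := by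
  have hX : Integrable X μ := Integrable.of_bound hm.aestronglyMeasurable B hB
  have h_lower := mul_integral_le_cgf hX (integrable_exp_mul_of_mem_Icc (t := l⁻¹) hm
    (hB.mono fun ω hω ↦ abs_le.mp hω))
  have h_upper := cgf_le_mul_integral_add_of_abs_le hm hB l⁻¹
  have h_scaled_lower : μ[X] ≤ l * cgf X μ l⁻¹ := by
    simpa [hl.ne'] using mul_le_mul_of_nonneg_left h_lower hl.le
  have h_scaled_upper : l * cgf X μ l⁻¹ ≤ μ[X] + B ^ 2 / (2 * l) :=
    calc l * cgf X μ l⁻¹ ≤ l * (l⁻¹ * μ[X] + B ^ 2 * l⁻¹ ^ 2 / 2) := by gcongr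
      _ = μ[X] + B ^ 2 / (2 * l) := by field_simp
  have h_gap_nonneg : 0 ≤ B ^ 2 / (2 * l) := by positivity
  rw [abs_le]
  constructor <;> linarith

end ProbabilityTheory

open ProbabilityTheory

theorem stmt17 {Ω : Type*} [MeasurableSpace Ω] (μ : Measure Ω) [IsProbabilityMeasure μ]
    (X : Ω → ℝ) (hX : Measurable X) (B : ℝ) (hB : ∀ ω, |X ω| ≤ B) :
    ∀ l : ℝ, B ≤ l →
      |l * Real.log (∫ ω, Real.exp (X ω / l) ∂μ) - ∫ ω, X ω ∂μ| ≤
        Real.exp 1 * B ^ 2 / l := by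
  intro l hl
  obtain ⟨ω₀⟩ := nonempty_of_isProbabilityMeasure μ
  rcases ((abs_nonneg _).trans ((hB ω₀).trans hl)).eq_or_lt with rfl | hl0
  · obtain rfl : X = 0 := funext fun ω ↦ abs_nonpos_iff.mp ((hB ω).trans hl)
    simp
  have hmgf : ∫ ω, exp (X ω / l) ∂μ = mgf X μ l⁻¹ := by simp_rw [mgf, div_eq_inv_mul]
  calc _ ≤ B ^ 2 / (2 * l) := by
        rw [hmgf, ← cgf]
        exact abs_mul_cgf_inv_sub_integral_le hX.aemeasurable (.of_forall hB) hl0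
    _ = 2⁻¹ * (B ^ 2 / l) := by ring
    _ ≤ exp 1 * B ^ 2 / l := by
        rw [mul_div_assoc]
        gcongr
        linarith [add_one_le_exp 1]
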